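/- Let D be a directed network on node set N and let i ∈ M(D) be a middleman in D. Then the robustness of i satisfies 1 ≤ ρ_i(D) ≤ min{b_i(D), d⁺_i + d⁻_i − 1}, where b_i(D) is the brokerage of i and d⁺_i, d⁻_i are the out- and in-degree of i. -/

import Mathlib

/-!
Any irreflexive `D' ⊋ D` in which `i` is no longer a middleman witnesses
`1 ≤ ρ_i(D) ≤ #D' - #D`, and `i` stops being a middleman as soon as every pair `a, b ≠ i`
connected in `D'` stays connected in `D' - i`. Two supersets achieve this. Choosing an
in-neighbour `h` of `i`, join the other in-neighbours of `i` to `h` and `h` to the out-neighbours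
of `i`: every path through `i` can then be rerouted through `h`, at the cost of at most
`d⁻_i - 1 + d⁺_i` arcs. Alternatively, add the arc `(a, b)` for every pair that `i` separates;
there are exactly `b_i(D)` of them, because removing `i` costs each `j ≠ i` precisely its
connections to `i` (counted by `#P_i(D)`) and to the nodes it only reaches through `i`.
-/

open Finset

variable {V : Type*} [Fintype V] [DecidableEq V]

/-- The arc set is irreflexive: no loops. -/
def IrreflArcs (D : Finset (V × V)) : Prop := ∀ i : V, (i, i) ∉ D

/-- `l` is an `(i,j)`-path in `D`: a list of pairwise distinct nodes, of length at
least 2, starting at `i`, ending at `j`, consecutive nodes joined by arcs of `D`. -/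
def IsPath (D : Finset (V × V)) (i j : V) (l : List V) : Prop :=
  l.Nodup ∧ l.Chain' (fun a b => (a, b) ∈ D) ∧
    l.head? = some i ∧ l.getLast? = some j ∧ 2 ≤ l.length

/-- Node `i` is connected to node `j`: there is at least one `(i,j)`-path. -/
def Conn (D : Finset (V × V)) (i j : V) : Prop := ∃ l : List V, IsPath D i j l

/-- The direct successors `s_i(D)`. -/
def dsucc (D : Finset (V × V)) (i : V) : Finset V := univ.filter fun j => (i, j) ∈ D

/-- The direct predecessors `p_i(D)`. -/
def dpred (D : Finset (V × V)) (i : V) : Finset V := univ.filter fun j => (j, i) ∈ D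

open scoped Classical in
/-- The successor set `S_i(D)`: all nodes to which `i` is connected. -/
noncomputable def succC (D : Finset (V × V)) (i : V) : Finset V :=
  univ.filter fun j => Conn D i j

open scoped Classical in
/-- The predecessor set `P_i(D)`: all nodes that are connected to `i`. -/
noncomputable def predC (D : Finset (V × V)) (i : V) : Finset V :=
  univ.filter fun j => Conn D j i

/-- An intermediary: at least one direct predecessor, at least one direct successor,
and at least two distinct direct neighbours. -/
def Intermediary (D : Finset (V × V)) (i : V) : Prop :=
  (dpred D i).Nonempty ∧ (dsucc D i).Nonempty ∧ 2 ≤ (dsucc D i ∪ dpred D i).card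

/-- The induced subnetwork `D_M` on a node set `M`. -/
def inducedOn (D : Finset (V × V)) (M : Finset V) : Finset (V × V) :=
  D.filter fun e => e.1 ∈ M ∧ e.2 ∈ M

/-- The reduced network `D − i`. -/
def removeNode (D : Finset (V × V)) (i : V) : Finset (V × V) :=
  D.filter fun e => e.1 ≠ i ∧ e.2 ≠ i

/-- The reduced network `D − C`, removing a node set `C`. -/
def removeNodes (D : Finset (V × V)) (C : Finset V) : Finset (V × V) :=
  D.filter fun e => e.1 ∉ C ∧ e.2 ∉ C

/-- `h` is an `(i,j)`-middleman: `i ≠ j`, `h ∉ {i,j}`, there is at least one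
`(i,j)`-path, and `h` lies on every `(i,j)`-path. -/
def MmBetween (D : Finset (V × V)) (h i j : V) : Prop :=
  i ≠ j ∧ h ≠ i ∧ h ≠ j ∧ Conn D i j ∧ ∀ l : List V, IsPath D i j l → h ∈ l

/-- `h` is a middleman: an intermediary that is an `(i,j)`-middleman for some pair. -/
def IsMiddleman (D : Finset (V × V)) (h : V) : Prop :=
  Intermediary D h ∧ ∃ i j : V, MmBetween D h i j

/-- The network is weakly connected. -/
def WeakConn (D : Finset (V × V)) : Prop :=
  ∀ i j : V, i ≠ j → Conn D i j ∨ Conn D j i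

/-- The network `(M, D_M)` is weakly connected. -/
def WeakConnOn (D : Finset (V × V)) (M : Finset V) : Prop :=
  ∀ i ∈ M, ∀ j ∈ M, i ≠ j → Conn (inducedOn D M) i j ∨ Conn (inducedOn D M) j i

/-- The network is strongly connected. -/
def StrongConn (D : Finset (V × V)) : Prop :=
  ∀ i j : V, i ≠ j → Conn D i j

/-- `M` is a component of `D`. -/
def IsComponent (D : Finset (V × V)) (M : Finset V) : Prop :=
  WeakConnOn D M ∧ ∀ i ∉ M, ¬ WeakConnOn D (insert i M)

/-- The coverage `Γ_i(D)` of an intermediary `i`. -/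
noncomputable def coverage (D : Finset (V × V)) (i : V) : Finset (V × V) :=
  (predC D i ×ˢ succC D i).filter fun e => e.1 ≠ e.2

/-- The extended coverage `Γ̄_j(D)` of a node `j`. -/
noncomputable def extCoverage (D : Finset (V × V)) (j : V) : Finset (V × V) :=
  insert j (predC D j) ×ˢ insert j (succC D j)

/-- Intermediary `i` is contested by the node set `C ⊆ N \ {i}`. -/
def ContestedBy (D : Finset (V × V)) (i : V) (C : Finset V) : Prop :=
  i ∉ C ∧ coverage D i ⊆ C.biUnion fun j => extCoverage (removeNode D i) j

/-- The brokerage `b_i(D)`. -/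
noncomputable def brokerage (D : Finset (V × V)) (i : V) : ℤ :=
  (∑ j ∈ univ.erase i,
      (((succC D j).card : ℤ) - ((succC (removeNode D i) j).card : ℤ)))
    - ((predC D i).card : ℤ)

/-- The maximal potential brokerage `B(D)`. -/
noncomputable def maxBrokerage (D : Finset (V × V)) : ℤ :=
  ∑ i : V, (((succC D i).card : ℤ) - ((dsucc D i).card : ℤ))

/-- The middleman power measure `ν_i(D) = b_i(D) / max{B(D), 1}`. -/
noncomputable def power (D : Finset (V × V)) (i : V) : ℚ :=
  (brokerage D i : ℚ) / ((max (maxBrokerage D) 1 : ℤ) : ℚ)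

/-- The robustness `ρ_i(D)` of a middleman `i`. -/
noncomputable def robustness (D : Finset (V × V)) (i : V) : ℕ :=
  sInf {m : ℕ | ∃ D' : Finset (V × V),
      IrreflArcs D' ∧ D ⊂ D' ∧ ¬ IsMiddleman D' i ∧ D'.card = m} - D.card

/-- The dual robustness `ρ*_i(D)` of a middleman `i`. -/
noncomputable def dualRobustness (D : Finset (V × V)) (i : V) : ℕ :=
  D.card - sSup {m : ℕ | ∃ D' : Finset (V × V),
      D' ⊆ D ∧ ¬ IsMiddleman D' i ∧ D'.card = m}

/-- The node-robustness `ψ_i(D)` of a middleman `i`. -/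
noncomputable def nodeRobustness (D : Finset (V × V)) (i : V) : ℕ :=
  sInf {m : ℕ | ∃ C : Finset V,
      i ∉ C ∧ ¬ IsMiddleman (removeNodes D C) i ∧ C.card = m}

/-- Direct neighbours in the underlying undirected network. -/
def nbr (D : Finset (V × V)) (i : V) : Finset V := dsucc D i ∪ dpred D i

/-- The local clustering coefficient `C_i = 2 L_i / (d_i (d_i − 1))`, computed here as
the number of ordered adjacent pairs of neighbours divided by `d_i (d_i − 1)`. -/
def clustering (D : Finset (V × V)) (i : V) : ℚ :=
  (((nbr D i ×ˢ nbr D i).filter fun e =>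
      e.1 ≠ e.2 ∧ ((e.1, e.2) ∈ D ∨ (e.2, e.1) ∈ D)).card : ℚ)
    / (((nbr D i).card : ℚ) * (((nbr D i).card : ℚ) - 1))
namespace List
variable {α : Type*} {r : α → α → Prop} {l : List α} {a b : α}

theorem isChain_and_iff_of_two_le_length {p : α → Prop} (hl : 2 ≤ l.length) :
    l.IsChain (fun x y => r x y ∧ p x ∧ p y) ↔ l.IsChain r ∧ ∀ x ∈ l, p x := by
  induction l with
  | nil => simp at hl
  | cons x t ih =>
    rcases t with _ | ⟨y, t⟩
    · simp at hl
    rcases t with _ | ⟨z, t⟩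
    · simp
    · simp only [isChain_cons_cons, ih (by simp), mem_cons, forall_eq_or_imp]
      tauto

theorem reflTransGen_of_isChain (hc : l.IsChain r) (ha : l.head? = some a)
    (hb : l.getLast? = some b) : Relation.ReflTransGen r a b := by
  obtain ⟨t, rfl⟩ := head?_eq_some_iff.mp ha
  rw [getLast?_eq_some_getLast (cons_ne_nil a t), Option.some_inj] at hb
  exact relationReflTransGen_of_exists_isChain_cons t hc hb

theorem exists_nodup_isChain_of_reflTransGen (h : Relation.ReflTransGen r a b) :
    ∃ l : List α, l.Nodup ∧ l.IsChain r ∧ l.head? = some a ∧ l.getLast? = some b := by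
  induction h using Relation.ReflTransGen.head_induction_on with
  | refl => exact ⟨[b], nodup_singleton b, isChain_singleton b, rfl, rfl⟩
  | @head a c hac _ ih =>
    obtain ⟨l, hnd, hc, hl_head, hb⟩ := ih
    by_cases hal : a ∈ l
    · obtain ⟨s, t, rfl⟩ := append_of_mem hal
      refine ⟨a :: t, hnd.sublist (sublist_append_right s _), hc.right_of_append, rfl, ?_⟩
      rwa [getLast?_append_of_ne_nil _ (cons_ne_nil a t)] at hb
    · obtain ⟨t, rfl⟩ := head?_eq_some_iff.mp hl_head
      refine ⟨a :: c :: t, nodup_cons.mpr ⟨hal, hnd⟩, hc.cons_cons hac, rfl, ?_⟩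
      rwa [getLast?_cons_cons]

theorem Nodup.ne_of_head?_of_getLast? (hnd : l.Nodup) (ha : l.head? = some a)
    (hb : l.getLast? = some b) (hl : 2 ≤ l.length) : a ≠ b := by
  obtain ⟨_ | ⟨y, t⟩, rfl⟩ := head?_eq_some_iff.mp ha
  · simp at hl
  · rintro rfl
    rw [getLast?_cons_cons] at hb
    exact (nodup_cons.mp hnd).1 (mem_of_getLast? hb)

theorem two_le_length_of_head?_of_getLast? (ha : l.head? = some a) (hb : l.getLast? = some b)
    (hab : a ≠ b) : 2 ≤ l.length := by
  match l, ha, hb with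
  | [_], ha, hb => simp_all
  | _ :: _ :: _, _, _ => simp

end List

section Network
variable {N : Type*} {D E : Finset (N × N)} {h i a b : N}

theorem conn_iff_reflTransGen :
    Conn D a b ↔ a ≠ b ∧ Relation.ReflTransGen (fun x y => (x, y) ∈ D) a b := by
  constructor
  · rintro ⟨l, hnd, hc, ha, hb, hl⟩
    exact ⟨hnd.ne_of_head?_of_getLast? ha hb hl, List.reflTransGen_of_isChain hc ha hb⟩
  · rintro ⟨hab, h⟩
    obtain ⟨l, hnd, hc, ha, hb⟩ := List.exists_nodup_isChain_of_reflTransGen h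
    exact ⟨l, hnd, hc, ha, hb, List.two_le_length_of_head?_of_getLast? ha hb hab⟩

theorem Conn.ne (h : Conn D a b) : a ≠ b :=
  (conn_iff_reflTransGen.mp h).1

theorem conn_of_mem (hab : a ≠ b) (h : (a, b) ∈ D) : Conn D a b :=
  conn_iff_reflTransGen.mpr ⟨hab, .single h⟩

theorem Conn.mono (h : Conn D a b) (hDE : D ⊆ E) : Conn E a b :=
  let ⟨hab, h⟩ := conn_iff_reflTransGen.mp h
  conn_iff_reflTransGen.mpr ⟨hab, Relation.ReflTransGen.mono (fun _ _ hxy => hDE hxy) _ _ h⟩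

theorem mem_succC [Fintype N] : b ∈ succC D a ↔ Conn D a b := by
  simp [succC]

theorem mem_predC [Fintype N] : a ∈ predC D b ↔ Conn D a b := by
  simp [predC]

variable [DecidableEq N]

theorem removeNode_mono (hDE : D ⊆ E) : removeNode D i ⊆ removeNode E i :=
  filter_subset_filter _ hDE

theorem isPath_removeNode_iff {l : List N} :
    IsPath (removeNode D i) a b l ↔ IsPath D a b l ∧ i ∉ l := by
  simp only [IsPath, removeNode, mem_filter]
  constructor
  · rintro ⟨hnd, hc, ha, hb, hl⟩
    obtain ⟨hc, hi⟩ := (List.isChain_and_iff_of_two_le_length (p := (· ≠ i)) hl).mp hc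
    exact ⟨⟨hnd, hc, ha, hb, hl⟩, fun h => hi i h rfl⟩
  · rintro ⟨⟨hnd, hc, ha, hb, hl⟩, hi⟩
    refine ⟨hnd, ?_, ha, hb, hl⟩
    exact (List.isChain_and_iff_of_two_le_length (p := (· ≠ i)) hl).mpr
      ⟨hc, fun x hx hxi => hi (hxi ▸ hx)⟩

theorem conn_removeNode_iff : Conn (removeNode D i) a b ↔ ∃ l, IsPath D a b l ∧ i ∉ l :=
  exists_congr fun _ => isPath_removeNode_iff

theorem not_conn_removeNode_right : ¬ Conn (removeNode D i) a i := by
  rintro ⟨l, hl⟩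
  exact (isPath_removeNode_iff.mp hl).2 (List.mem_of_getLast? hl.2.2.2.1)

theorem mmBetween_iff :
    MmBetween D h a b ↔ h ≠ a ∧ h ≠ b ∧ Conn D a b ∧ ¬ Conn (removeNode D h) a b := by
  simp only [MmBetween, conn_removeNode_iff, not_exists, not_and, not_not]
  exact ⟨fun ⟨_, hha, hhb, hab, hall⟩ => ⟨hha, hhb, hab, hall⟩,
    fun ⟨hha, hhb, hab, hall⟩ => ⟨hab.ne, hha, hhb, hab, hall⟩⟩

theorem not_isMiddleman_of_conn_removeNode [Fintype N]
    (h : ∀ a b, i ≠ a → i ≠ b → Conn D a b → Conn (removeNode D i) a b) :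
    ¬ IsMiddleman D i := by
  rintro ⟨-, a, b, hab⟩
  obtain ⟨hia, hib, hconn, hsep⟩ := mmBetween_iff.mp hab
  exact hsep (h a b hia hib hconn)

end Network

theorem robustness_bounds_of_not_isMiddleman {D D' : Finset (V × V)} {i : V}
    (hD' : IrreflArcs D') (hDD' : D ⊆ D') (hm : IsMiddleman D i) (hm' : ¬ IsMiddleman D' i) :
    1 ≤ robustness D i ∧ robustness D i + #D ≤ #D' := by
  set S := {m : ℕ | ∃ D' : Finset (V × V),
    IrreflArcs D' ∧ D ⊂ D' ∧ ¬ IsMiddleman D' i ∧ D'.card = m}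
  have hD'S : #D' ∈ S := ⟨D', hD', hDD'.ssubset_of_ne (by rintro rfl; exact hm' hm), hm', rfl⟩
  have hlt : #D < sInf S := by
    obtain ⟨E, -, hDE, -, hE⟩ := Nat.sInf_mem ⟨_, hD'S⟩
    exact hE ▸ card_lt_card hDE
  have hle : sInf S ≤ #D' := Nat.sInf_le hD'S
  change 1 ≤ sInf S - #D ∧ sInf S - #D + #D ≤ #D'
  omega

section Bypass
variable {D : Finset (V × V)} {i h : V}

/-- Every arc into or out of `i` is copied at `h`, so that `h` can stand in for `i` on any path. -/
def bypassArcs (D : Finset (V × V)) (i h : V) : Finset (V × V) :=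
  ((dpred D i).erase h).image (·, h) ∪ ((dsucc D i).erase h).image (h, ·)

theorem mem_bypassArcs {x y : V} :
    (x, y) ∈ bypassArcs D i h ↔
      x ≠ h ∧ y = h ∧ (x, i) ∈ D ∨ x = h ∧ y ≠ h ∧ (i, y) ∈ D := by
  simp only [bypassArcs, dpred, dsucc, mem_union, mem_image, mem_erase, mem_filter, mem_univ,
    true_and, Prod.mk.injEq]
  grind

theorem card_bypassArcs_add_one_le (hh : h ∈ dpred D i) :
    #(bypassArcs D i h) + 1 ≤ #(dpred D i) + #(dsucc D i) := by
  calc #(bypassArcs D i h) + 1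
      ≤ #((dpred D i).erase h) + #((dsucc D i).erase h) + 1 := by
        gcongr
        exact (card_union_le _ _).trans (add_le_add card_image_le card_image_le)
    _ ≤ #(dpred D i) + #(dsucc D i) := by
        have := card_erase_add_one hh
        have := card_erase_le (s := dsucc D i) (a := h)
        omega

theorem irreflArcs_union_bypassArcs (hD : IrreflArcs D) : IrreflArcs (D ∪ bypassArcs D i h) := by
  intro x hx
  rcases mem_union.mp hx with hx | hx
  · exact hD x hx
  · rcases mem_bypassArcs.mp hx with ⟨hxh, rfl, -⟩ | ⟨rfl, hxh, -⟩ <;> exact hxh rfl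

theorem reflTransGen_removeNode_union_bypassArcs (hhi : h ≠ i) {x y : V}
    (hxy : (x, y) ∈ D ∪ bypassArcs D i h) :
    Relation.ReflTransGen (fun x y => (x, y) ∈ removeNode (D ∪ bypassArcs D i h) i)
      (if x = i then h else x) (if y = i then h else y) := by
  simp only [removeNode, mem_filter, mem_union, mem_bypassArcs] at hxy ⊢
  split_ifs with hx hy hy
  · rfl
  · rcases eq_or_ne y h with rfl | hyh
    · rfl
    · exact .single ⟨by grind, hhi, hy⟩
  · rcases eq_or_ne x h with rfl | hxh
    · rfl
    · exact .single ⟨by grind, hx, hhi⟩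
  · exact .single ⟨hxy, hx, hy⟩

theorem not_isMiddleman_union_bypassArcs (hhi : h ≠ i) :
    ¬ IsMiddleman (D ∪ bypassArcs D i h) i := by
  refine not_isMiddleman_of_conn_removeNode fun a b hia hib hab => ?_
  obtain ⟨hab, hpath⟩ := conn_iff_reflTransGen.mp hab
  refine conn_iff_reflTransGen.mpr ⟨hab, ?_⟩
  have := Relation.ReflTransGen.lift' (fun x => if x = i then h else x)
    (fun x y hxy => reflTransGen_removeNode_union_bypassArcs hhi hxy) a b hpath
  simpa [Function.onFun, Ne.symm hia, Ne.symm hib] using this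

end Bypass

section Brokerage
variable {D : Finset (V × V)} {i : V}

open scoped Classical in
noncomputable def brokeredPairs (D : Finset (V × V)) (i : V) : Finset (V × V) :=
  univ.filter fun e => MmBetween D i e.1 e.2

omit [DecidableEq V] in
theorem mem_brokeredPairs {a b : V} : (a, b) ∈ brokeredPairs D i ↔ MmBetween D i a b := by
  simp [brokeredPairs]

theorem lostConnections_eq_brokeredPairs_union :
    {e ∈ (univ.erase i) ×ˢ (univ : Finset V) |
        e.2 ∈ succC D e.1 \ succC (removeNode D i) e.1} =
      brokeredPairs D i ∪ predC D i ×ˢ {i} := by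
  ext ⟨j, k⟩
  simp only [mem_filter, mem_product, mem_erase, mem_univ, mem_sdiff, mem_succC, mem_predC,
    mem_union, mem_brokeredPairs, mmBetween_iff, mem_singleton, and_true]
  constructor
  · rintro ⟨hji, hjk, hsep⟩
    by_cases hki : k = i
    · exact .inr ⟨hki ▸ hjk, hki⟩
    · exact .inl ⟨Ne.symm hji, Ne.symm hki, hjk, hsep⟩
  · rintro (⟨hij, -, hjk, hsep⟩ | ⟨hji, rfl⟩)
    · exact ⟨Ne.symm hij, hjk, hsep⟩
    · exact ⟨hji.ne, hji, not_conn_removeNode_right⟩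

theorem brokerage_eq_card_brokeredPairs : brokerage D i = #(brokeredPairs D i) := by
  have hterm : ∀ j, (#(succC D j) : ℤ) - #(succC (removeNode D i) j) =
      #(succC D j \ succC (removeNode D i) j) := by
    intro j
    have hsub : succC (removeNode D i) j ⊆ succC D j := fun _ hk =>
      mem_succC.mpr ((mem_succC.mp hk).mono (filter_subset _ _))
    rw [card_sdiff_of_subset hsub, Nat.cast_sub (card_le_card hsub)]
  have hsum : ∑ j ∈ univ.erase i, #(succC D j \ succC (removeNode D i) j) =
      #{e ∈ (univ.erase i) ×ˢ (univ : Finset V) |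
        e.2 ∈ succC D e.1 \ succC (removeNode D i) e.1} := by
    rw [card_filter, sum_product]
    exact sum_congr rfl fun j _ => by rw [← card_filter]; congr 1; ext; simp
  have hdisj : Disjoint (brokeredPairs D i) (predC D i ×ˢ {i}) := by
    rw [disjoint_left]
    rintro ⟨j, k⟩ hjk hk
    exact (mmBetween_iff.mp (mem_brokeredPairs.mp hjk)).2.1
      (mem_singleton.mp (mem_product.mp hk).2).symm
  rw [brokerage, sum_congr rfl fun j _ => hterm j, ← Nat.cast_sum, hsum,
    lostConnections_eq_brokeredPairs_union, card_union_of_disjoint hdisj, card_product,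
    card_singleton]
  push_cast
  ring

theorem irreflArcs_union_brokeredPairs (hD : IrreflArcs D) :
    IrreflArcs (D ∪ brokeredPairs D i) := by
  intro x hx
  rcases mem_union.mp hx with hx | hx
  · exact hD x hx
  · exact (mmBetween_iff.mp (mem_brokeredPairs.mp hx)).2.2.1.ne rfl

theorem Conn.of_union_brokeredPairs {a b : V} (h : Conn (D ∪ brokeredPairs D i) a b) :
    Conn D a b := by
  obtain ⟨hab, hpath⟩ := conn_iff_reflTransGen.mp h
  refine conn_iff_reflTransGen.mpr
    ⟨hab, Relation.reflTransGen_closed (fun x y hxy => ?_) a b hpath⟩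
  rcases mem_union.mp hxy with hxy | hxy
  · exact .single hxy
  · exact (conn_iff_reflTransGen.mp (mmBetween_iff.mp (mem_brokeredPairs.mp hxy)).2.2.1).2

theorem not_isMiddleman_union_brokeredPairs : ¬ IsMiddleman (D ∪ brokeredPairs D i) i := by
  refine not_isMiddleman_of_conn_removeNode fun a b hia hib hab => ?_
  have hab := hab.of_union_brokeredPairs
  by_cases hsep : Conn (removeNode D i) a b
  · exact hsep.mono (removeNode_mono subset_union_left)
  · have hmem : (a, b) ∈ brokeredPairs D i :=
      mem_brokeredPairs.mpr (mmBetween_iff.mpr ⟨hia, hib, hab, hsep⟩)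
    exact conn_of_mem hab.ne (mem_filter.mpr ⟨mem_union_right _ hmem, Ne.symm hia, Ne.symm hib⟩)

end Brokerage

/-- For every middleman `i`, `1 ≤ ρ_i(D) ≤ min{b_i(D), d⁺_i + d⁻_i − 1}`. -/
theorem statement14 {V : Type*} [Fintype V] [DecidableEq V] (D : Finset (V × V))
    (hirr : IrreflArcs D) (i : V) (hm : IsMiddleman D i) :
    1 ≤ robustness D i ∧
      (robustness D i : ℤ) ≤
        min (brokerage D i) (((dsucc D i).card : ℤ) + ((dpred D i).card : ℤ) - 1) := by
  obtain ⟨h, hh⟩ := hm.1.1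
  have hhi : h ≠ i := fun hhi => hirr i (by simpa [dpred, hhi] using hh)
  obtain ⟨hpos, hbyp⟩ := robustness_bounds_of_not_isMiddleman
    (irreflArcs_union_bypassArcs hirr) subset_union_left hm (not_isMiddleman_union_bypassArcs hhi)
  obtain ⟨-, hbrk⟩ := robustness_bounds_of_not_isMiddleman
    (irreflArcs_union_brokeredPairs hirr) subset_union_left hm
    (not_isMiddleman_union_brokeredPairs (i := i))
  have := card_union_le D (bypassArcs D i h)
  have := card_bypassArcs_add_one_le hh
  have := card_union_le D (brokeredPairs D i)
  rw [brokerage_eq_card_brokeredPairs]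
  refine ⟨hpos, le_min ?_ ?_⟩ <;> omega
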